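/- (Burns–Hale) A group G is left-orderable if and only if every nontrivial finitely generated subgroup H of G admits a nontrivial homomorphism to some left-orderable group. In particular, every locally indicable group is left-orderable. -/

import Mathlib

def IsLeftInvariant {G : Type*} [Group G] (r : G → G → Prop) : Prop :=
  ∀ f g h : G, r g h → r (f * g) (f * h)

def IsRightInvariant {G : Type*} [Group G] (r : G → G → Prop) : Prop :=
  ∀ f g h : G, r g h → r (g * f) (h * f)

def IsLeftOrderable (G : Type*) [Group G] : Prop :=
  ∃ r : G → G → Prop, IsStrictTotalOrder G r ∧ IsLeftInvariant r

def IsBiOrderable (G : Type*) [Group G] : Prop :=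
  ∃ r : G → G → Prop, IsStrictTotalOrder G r ∧ IsLeftInvariant r ∧ IsRightInvariant r

/-- `P` is the positive cone of a left-ordering: a subsemigroup such that
`G = {1} ⊔ P ⊔ P⁻¹` (disjointly). -/
def IsPositiveCone {G : Type*} [Group G] (P : Set G) : Prop :=
  (∀ a ∈ P, ∀ b ∈ P, a * b ∈ P) ∧
  (∀ g : G, g = 1 ∨ g ∈ P ∨ g⁻¹ ∈ P) ∧
  (1 : G) ∉ P ∧
  (∀ g : G, ¬(g ∈ P ∧ g⁻¹ ∈ P))

/-!
Conrad: `G` is left-orderable iff every finite set of nontrivial elements can be signed so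
that no product of the signed elements is `1`; a compactness argument reduces this to finite sets.
For a finite set `S`, a nontrivial map `f` from `⟨S⟩` to a left-ordered group signs the elements
of `S` outside `ker f` by the sign of their image, and the elements inside `ker f`, a smaller
set, are signed by induction; the lexicographic combination of the two cones is consistent.
Locally indicable groups are the special case `L = ℤ`.
-/

universe u

theorem isLeftOrderable_of_linearOrder (G : Type*) [Group G] [LinearOrder G]
    [MulLeftStrictMono G] : IsLeftOrderable G :=
  ⟨(· < ·), inferInstance, fun f _ _ h => mul_lt_mul_right h f⟩

theorem IsLeftOrderable.of_injective {G K : Type*} [Group G] [Group K] (hK : IsLeftOrderable K)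
    (φ : G →* K) (hφ : Function.Injective φ) : IsLeftOrderable G := by
  obtain ⟨r, hr, hinv⟩ := hK
  refine ⟨InvImage r φ, { toTrichotomous := InvImage.trichotomous hφ }, fun f g h hgh => ?_⟩
  simpa only [InvImage, map_mul] using hinv (φ f) _ _ hgh

theorem IsLeftOrderable.ulift {G : Type*} [Group G] (hG : IsLeftOrderable G) :
    IsLeftOrderable (ULift G) :=
  hG.of_injective MulEquiv.ulift.toMonoidHom (MulEquiv.injective _)

section IsLeftInvariant

variable {L : Type*} [Group L] {r : L → L → Prop}

theorem IsLeftInvariant.one_lt_mul [IsTrans L r] (hr : IsLeftInvariant r) {a b : L}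
    (ha : r 1 a) (hb : r 1 b) : r 1 (a * b) :=
  _root_.trans ha (by simpa using hr a 1 b hb)

theorem IsLeftInvariant.one_lt_inv (hr : IsLeftInvariant r) {a : L} (ha : r a 1) : r 1 a⁻¹ := by
  simpa using hr a⁻¹ a 1 ha

theorem IsLeftInvariant.one_lt_ite [IsStrictTotalOrder L r] [DecidablePred (r 1)]
    (hr : IsLeftInvariant r) {a : L} (ha : a ≠ 1) : r 1 (if r 1 a then a else a⁻¹) := by
  split_ifs with h
  · exact h
  · exact hr.one_lt_inv (((trichotomous_of r 1 a).resolve_left h).resolve_left (Ne.symm ha))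

end IsLeftInvariant

theorem IsPositiveCone.isLeftOrderable {G : Type*} [Group G] {P : Set G} (hP : IsPositiveCone P) :
    IsLeftOrderable G := by
  obtain ⟨hmul, htri, hone, hasymm⟩ := hP
  refine ⟨fun a b => a⁻¹ * b ∈ P, { trichotomous := ?_, irrefl := ?_, trans := ?_ }, ?_⟩
  · intro a b hab hba
    simpa [inv_mul_eq_one, hab, hba] using htri (a⁻¹ * b)
  · simpa using hone
  · intro a b c hab hbc
    simpa [mul_assoc] using hmul _ hab _ hbc
  · intro f g h hgh
    simpa [mul_assoc] using hgh

theorem Subsemigroup.exists_finset_subset_of_mem_closure {M : Type*} [Mul M] [DecidableEq M]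
    {s : Set M} {x : M} (hx : x ∈ closure s) :
    ∃ t : Finset M, ↑t ⊆ s ∧ x ∈ closure (t : Set M) := by
  induction hx using closure_induction with
  | mem x hx => exact ⟨{x}, by simpa using hx, subset_closure (by simp)⟩
  | mul x y _ _ hx hy =>
    obtain ⟨t, hts, hxt⟩ := hx
    obtain ⟨u, hus, hyu⟩ := hy
    refine ⟨t ∪ u, by simpa using And.intro hts hus, mul_mem ?_ ?_⟩
    · exact closure_mono (by simp) hxt
    · exact closure_mono (by simp) hyu

section Signs

variable {G K : Type*} [Group G] [Group K]

def signedBy (σ : G → Bool) (g : G) : G :=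
  if σ g then g else g⁻¹

theorem map_signedBy (φ : G →* K) (σ : G → Bool) (g : G) :
    φ (signedBy σ g) = if σ g then φ g else (φ g)⁻¹ := by
  unfold signedBy; split_ifs <;> simp

/-- Conrad's condition on `S`. -/
def HasConsistentSigns (S : Set G) : Prop :=
  ∃ σ : G → Bool, (1 : G) ∉ Subsemigroup.closure (signedBy σ '' S)

theorem HasConsistentSigns.mono {S T : Set G} (hT : HasConsistentSigns T) (hST : S ⊆ T) :
    HasConsistentSigns S :=
  let ⟨σ, hσ⟩ := hT
  ⟨σ, fun h1 => hσ (Subsemigroup.closure_mono (Set.image_mono hST) h1)⟩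

theorem HasConsistentSigns.of_image {S : Set G} (φ : G →* K)
    (hS : HasConsistentSigns (φ '' S)) : HasConsistentSigns S := by
  obtain ⟨σ, hσ⟩ := hS
  refine ⟨σ ∘ φ, fun h1 => hσ ?_⟩
  have himage : φ.toMulHom '' (signedBy (σ ∘ φ) '' S) = signedBy σ '' (φ '' S) := by
    simp only [Set.image_image]
    refine Set.image_congr fun g _ => ?_
    change φ _ = _
    rw [map_signedBy]
    rfl
  rw [← himage, ← MulHom.map_mclosure]
  exact ⟨1, h1, φ.map_one⟩

theorem HasConsistentSigns.image {S : Set G} (hS : HasConsistentSigns S) (φ : G →* K)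
    (hφ : Function.Injective φ) : HasConsistentSigns (φ '' S) := by
  obtain ⟨σ, hσ⟩ := hS
  refine ⟨Function.extend φ σ fun _ => true, fun h1 => hσ ?_⟩
  have himage : signedBy (Function.extend φ σ fun _ => true) '' (φ '' S) =
      φ.toMulHom '' (signedBy σ '' S) := by
    simp only [Set.image_image]
    refine Set.image_congr fun g _ => ?_
    change _ = φ (signedBy σ g)
    rw [map_signedBy]
    simp [signedBy, hφ.extend_apply]
  rw [himage, ← MulHom.map_mclosure] at h1
  obtain ⟨x, hx, hx1⟩ := h1
  rwa [hφ (hx1.trans φ.map_one.symm)] at hx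

/-- Compactness: limit signs along an ultrafilter on finite sets are consistent on all of `X`. -/
theorem HasConsistentSigns.of_finset {X : Set G}
    (h : ∀ S : Finset G, ↑S ⊆ X → HasConsistentSigns (S : Set G)) :
    HasConsistentSigns X := by
  classical
  choose σ hσ using fun F : Finset G => h (F.filter (· ∈ X)) (by intro; simp +contextual)
  let U := Ultrafilter.of (Filter.atTop : Filter (Finset G))
  let τ : G → Bool := fun g => decide (∀ᶠ F in U, σ F g = true)
  have hτ : ∀ g, ∀ᶠ F in U, σ F g = τ g := by
    intro g
    by_cases hg : ∀ᶠ F in U, σ F g = true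
    · simp [τ, hg]
    · simpa [τ, hg] using U.eventually_not.2 hg
  refine ⟨τ, fun h1 => ?_⟩
  obtain ⟨T', hT'X, h1T⟩ := Subsemigroup.exists_finset_subset_of_mem_closure h1
  obtain ⟨T, hTX, rfl⟩ := Finset.subset_set_image_iff.1 hT'X
  have hsub : ∀ᶠ F in U, T ⊆ F := Ultrafilter.of_le _ (Filter.eventually_ge_atTop T)
  have hlarge : ∀ᶠ F in U, T ⊆ F ∧ ∀ g ∈ T, σ F g = τ g :=
    hsub.and (T.eventually_all.2 fun g _ => hτ g)
  obtain ⟨F, hTF, hστ⟩ := hlarge.exists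
  refine hσ F (Subsemigroup.closure_mono ?_ h1T)
  rw [Finset.coe_image]
  rintro _ ⟨g, hg, rfl⟩
  exact ⟨g, by simp [hTF hg, hTX hg], by simp [signedBy, hστ g hg]⟩

end Signs

theorem IsLeftOrderable.of_hasConsistentSigns {G : Type*} [Group G]
    (h : HasConsistentSigns {g : G | g ≠ 1}) : IsLeftOrderable G := by
  obtain ⟨σ, hσ⟩ := h
  set P := Subsemigroup.closure (signedBy σ '' {g : G | g ≠ 1})
  refine IsPositiveCone.isLeftOrderable (P := P) ⟨fun a ha b hb => P.mul_mem ha hb, fun g => ?_,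
    hσ, fun g ⟨hg, hg'⟩ => hσ (by simpa using P.mul_mem hg hg')⟩
  by_cases hg : g = 1
  · exact Or.inl hg
  · have hmem : signedBy σ g ∈ P := Subsemigroup.subset_closure ⟨g, hg, rfl⟩
    unfold signedBy at hmem
    split_ifs at hmem
    exacts [Or.inr (Or.inl hmem), Or.inr (Or.inr hmem)]

/-- The generators lie in the lexicographic cone `{t | 1 < f t} ∪ (ker f ∩ C)`, a subsemigroup
avoiding `1`. -/
theorem one_notMem_closure_of_lex {G L : Type*} [Group G] [Group L] {r : L → L → Prop}
    [IsStrictOrder L r] (hr : IsLeftInvariant r) (f : G →* L) {C : Subsemigroup G}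
    (hC : (1 : G) ∉ C) {T : Set G} (hT : ∀ t ∈ T, r 1 (f t) ∨ (f t = 1 ∧ t ∈ C)) :
    (1 : G) ∉ Subsemigroup.closure T := by
  let Q : Subsemigroup G :=
    { carrier := {t | r 1 (f t) ∨ (f t = 1 ∧ t ∈ C)}
      mul_mem' := by
        rintro a b (ha | ⟨ha, haC⟩) (hb | ⟨hb, hbC⟩) <;>
          simp only [Set.mem_ofPred_eq, map_mul]
        · exact Or.inl (hr.one_lt_mul ha hb)
        · simpa [hb] using Or.inl ha
        · simpa [ha] using Or.inl hb
        · exact Or.inr ⟨by simp [ha, hb], C.mul_mem haC hbC⟩ }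
  intro h1
  rcases Subsemigroup.closure_le.2 (show T ⊆ Q from hT) h1 with h | ⟨-, h⟩
  · exact irrefl_of r 1 (by simpa using h)
  · exact hC h

theorem Subgroup.exists_mem_apply_ne_one {G L : Type*} [Group G] [Group L] {S : Set G}
    {f : closure S →* L} (hf : f ≠ 1) :
    ∃ g, ∃ hg : g ∈ S, f ⟨g, subset_closure hg⟩ ≠ 1 := by
  by_contra! h
  exact hf (MonoidHom.eq_of_eqOn_dense closure_closure_coe_preimage fun x hx => h x hx)

theorem HasConsistentSigns.of_ker {G L : Type*} [Group G] [Group L] {r : L → L → Prop}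
    [IsStrictTotalOrder L r] (hr : IsLeftInvariant r) (f : G →* L) {S : Set G}
    (hS : HasConsistentSigns (S ∩ f.ker)) : HasConsistentSigns S := by
  classical
  obtain ⟨σ₁, hσ₁⟩ := hS
  let σ : G → Bool := fun g => if f g = 1 then σ₁ g else decide (r 1 (f g))
  refine ⟨σ, one_notMem_closure_of_lex hr f hσ₁ ?_⟩
  rintro _ ⟨g, hgS, rfl⟩
  by_cases hg : f g = 1
  · refine Or.inr ⟨by simp [map_signedBy, hg],
      Subsemigroup.subset_closure ⟨g, ⟨hgS, hg⟩, ?_⟩⟩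
    simp [signedBy, σ, hg]
  · rw [map_signedBy]
    simpa [σ, hg] using Or.inl (hr.one_lt_ite hg)

def FGSubgroupsMapNontriviallyToLeftOrderable (G : Type u) [Group G] : Prop :=
  ∀ H : Subgroup G, H.FG → H ≠ ⊥ →
    ∃ (L : Type u) (_ : Group L), IsLeftOrderable L ∧ ∃ f : H →* L, f ≠ 1

theorem FGSubgroupsMapNontriviallyToLeftOrderable.hasConsistentSigns {G : Type u} [Group G]
    (hG : FGSubgroupsMapNontriviallyToLeftOrderable G) (S : Finset G) (hS : (1 : G) ∉ S) :
    HasConsistentSigns (S : Set G) := by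
  classical
  induction S using Finset.strongInduction with
  | H S ih =>
  rcases S.eq_empty_or_nonempty with rfl | ⟨g₀, hg₀⟩
  · exact ⟨fun _ => true, by simp [Subsemigroup.notMem_bot]⟩
  set H := Subgroup.closure (S : Set G)
  have hH : H ≠ ⊥ := Subgroup.ne_bot_iff_exists_ne_one.2
    ⟨⟨g₀, Subgroup.subset_closure hg₀⟩,
      fun h => hS (by rwa [← show g₀ = 1 from congrArg Subtype.val h])⟩
  obtain ⟨L, _, ⟨r, hr, hrinv⟩, f, hf⟩ := hG H ⟨S, rfl⟩ hH
  obtain ⟨g₁, hg₁, hfg₁⟩ := Subgroup.exists_mem_apply_ne_one hf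
  let S₁ := S.filter (· ∈ f.ker.map H.subtype)
  have hS₁ : S₁ ⊂ S := Finset.filter_ssubset.2
    ⟨g₁, hg₁, fun ⟨x, hx, hxg⟩ => hfg₁ (by subst hxg; exact hx)⟩
  have hsigns₁ : HasConsistentSigns (S₁ : Set G) :=
    ih S₁ hS₁ fun h => hS (Finset.mem_of_mem_filter _ h)
  have hsignsH : HasConsistentSigns (Subtype.val ⁻¹' (S : Set G) : Set H) := by
    refine hsigns₁.mono ?_ |>.of_image H.subtype |>.of_ker hrinv f
    rintro _ ⟨x, ⟨hxS, hx⟩, rfl⟩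
    exact Finset.mem_filter.2 ⟨hxS, x, hx, rfl⟩
  have hSH : (S : Set G) ⊆ Set.range ((↑) : H → G) := by
    rw [Subtype.range_coe_subtype]
    exact Subgroup.subset_closure
  simpa [Set.image_preimage_eq_of_subset hSH] using
    hsignsH.image H.subtype H.subtype_injective

theorem FGSubgroupsMapNontriviallyToLeftOrderable.isLeftOrderable {G : Type u} [Group G]
    (hG : FGSubgroupsMapNontriviallyToLeftOrderable G) : IsLeftOrderable G :=
  .of_hasConsistentSigns <| .of_finset fun S hS =>
    hG.hasConsistentSigns S fun h1 => hS h1 rfl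

theorem IsLeftOrderable.fgSubgroupsMapNontriviallyToLeftOrderable {G : Type u} [Group G]
    (hG : IsLeftOrderable G) : FGSubgroupsMapNontriviallyToLeftOrderable G := by
  intro H _ hH
  obtain ⟨x, hx⟩ := Subgroup.ne_bot_iff_exists_ne_one.1 hH
  exact ⟨H, inferInstance, hG.of_injective H.subtype H.subtype_injective, MonoidHom.id H,
    fun h => hx (DFunLike.congr_fun h x)⟩

theorem burns_hale {G : Type u} [Group G] :
    (IsLeftOrderable G ↔
      ∀ H : Subgroup G, H.FG → H ≠ ⊥ →
        ∃ (L : Type u) (_ : Group L), IsLeftOrderable L ∧ ∃ f : H →* L, f ≠ 1) ∧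
    ((∀ H : Subgroup G, H.FG → H ≠ ⊥ →
        ∃ f : H →* Multiplicative ℤ, Function.Surjective f) → IsLeftOrderable G) := by
  refine ⟨⟨IsLeftOrderable.fgSubgroupsMapNontriviallyToLeftOrderable,
    FGSubgroupsMapNontriviallyToLeftOrderable.isLeftOrderable⟩, fun hind => ?_⟩
  refine FGSubgroupsMapNontriviallyToLeftOrderable.isLeftOrderable fun H hfg hH => ?_
  obtain ⟨f, hf⟩ := hind H hfg hH
  refine ⟨_, inferInstance, (isLeftOrderable_of_linearOrder _).ulift,
    MulEquiv.ulift.symm.toMonoidHom.comp f, fun h => ?_⟩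
  obtain ⟨x, hx⟩ := hf (Multiplicative.ofAdd 1)
  simpa [hx] using DFunLike.congr_fun h x
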